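/- arXiv:2101.00107 — 4 statements merged into one kernel-verified Lean document; each statement's English description precedes it below -/
import Mathlib

section
/- Let q be a prime power, C ≥ 1, and α > 0 sufficiently small. For each i let F_i ⊆ [n] with |F_i| < αn, and let X_1, …, X_{⌊(1−6α)n⌋} be independent random vectors in F_q^n, where X_i is a near uniform vector of type F_i with constant C. Then with probability at least 1 − n(C/q)^{5αn}, the vectors X_1, …, X_{⌊(1−6α)n⌋} are linearly independent, i.e. the n × ⌊(1−6α)n⌋ matrix with these columns has full column rank. -/
/-!
If the columns are dependent, some column `X j` lies in the span `V` of the others, which has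
dimension at most `m - 1`. A vector of `V` is determined by at most `m - 1` of its coordinates,
so, discarding these and the exceptional coordinates `F j`, at least `k = ⌈5αn⌉` coordinates of
`X j` are forced by the remaining ones; by independence each forced coordinate costs a factor
`C / q`, whence `P(X j ∈ V) ≤ (C / q) ^ k`. A union bound over the `m ≤ n` columns concludes.
Since everything is finite, all probabilities are computed as sums of products of the laws of
the entries.
-/

open MeasureTheory ProbabilityTheory Finset Module
open scoped ENNReal

theorem Submodule.exists_detecting_finset_card_le_finrank {ι K : Type*} [Finite ι] [Field K]
    (V : Submodule K (ι → K)) :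
    ∃ A : Finset ι, #A ≤ finrank K V ∧ ∀ v ∈ V, (∀ i ∈ A, v i = 0) → v = 0 := by
  classical
  induction hd : finrank K V using Nat.strong_induction_on generalizing V with
  | _ d ih =>
  by_cases hV : V = ⊥
  · exact ⟨∅, by simp, fun v hv _ => by simpa [hV] using hv⟩
  obtain ⟨z, hzV, hz⟩ := Submodule.exists_mem_ne_zero_of_ne_bot hV
  obtain ⟨i, hi⟩ := Function.ne_iff.1 hz
  let W := V ⊓ LinearMap.ker (LinearMap.proj i : (ι → K) →ₗ[K] K)
  have hWV : W < V := lt_of_le_of_ne inf_le_left fun h => hi (h ▸ hzV).2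
  have hWd : finrank K W < d := hd ▸ Submodule.finrank_lt_finrank_of_lt hWV
  obtain ⟨A, hA, hAW⟩ := ih _ hWd W rfl
  refine ⟨insert i A, (card_insert_le _ _).trans (by omega), fun v hv h0 => ?_⟩
  exact hAW v ⟨hv, h0 i (mem_insert_self _ _)⟩ fun k hk => h0 k (mem_insert_of_mem hk)

section ProductWeights

variable {ι α : Type*} [Fintype ι] [Fintype α]

theorem sum_prod_le_one [DecidableEq ι] (w : ι → α → ℝ≥0∞) (hw : ∀ i, ∑ a, w i a ≤ 1) :
    ∑ x : ι → α, ∏ i, w i (x i) ≤ 1 := by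
  rw [← Fintype.prod_sum]
  exact prod_le_one' fun i _ => hw i

theorem sum_prod_le_pow_card_of_injOn (w : ι → α → ℝ≥0∞) (hw : ∀ i, ∑ a, w i a ≤ 1)
    {c : ℝ≥0∞} {G : Finset ι} (hc : ∀ i ∈ G, ∀ a, w i a ≤ c) {s : Finset (ι → α)}
    (hs : Set.InjOn (fun (x : ι → α) (i : {i // i ∉ G}) => x i) s) :
    ∑ x ∈ s, ∏ i, w i (x i) ≤ c ^ #G := by
  classical
  let ρ : (ι → α) → {i // i ∉ G} → α := fun x i => x i
  calc ∑ x ∈ s, ∏ i, w i (x i)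
      = ∑ x ∈ s, (∏ i : {i // i ∈ G}, w i (x i)) * ∏ i : {i // i ∉ G}, w i (ρ x i) :=
        sum_congr rfl fun x _ => by
          convert (Fintype.prod_subtype_mul_prod_subtype (· ∈ G) _).symm
    _ ≤ ∑ x ∈ s, c ^ #G * ∏ i : {i // i ∉ G}, w i (ρ x i) := by
        gcongr with x _
        calc ∏ i : {i // i ∈ G}, w i (x i) ≤ ∏ _i : {i // i ∈ G}, c :=
              prod_le_prod' fun i _ => hc i i.2 _
          _ = c ^ #G := by rw [prod_const, card_univ, Fintype.card_coe]
    _ = c ^ #G * ∑ y ∈ s.image ρ, ∏ i : {i // i ∉ G}, w i (y i) := by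
        rw [mul_sum, sum_image hs]
    _ ≤ c ^ #G * ∑ y : {i // i ∉ G} → α, ∏ i : {i // i ∉ G}, w i (y i) := by
        gcongr
        exact subset_univ _
    _ ≤ c ^ #G * 1 := by
        gcongr
        exact sum_prod_le_one (fun i : {i // i ∉ G} => w i) fun i => hw i
    _ = c ^ #G := mul_one _

theorem sum_prod_le_of_forall_section (W : ι → α → ℝ≥0∞)
    (hW : ∀ i, ∑ a, W i a ≤ 1) (j : ι) (S : ({i // i ≠ j} → α) → Finset α) {b : ℝ≥0∞}
    (hS : ∀ y, ∑ a ∈ S y, W j a ≤ b) {s : Finset (ι → α)}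
    (hs : ∀ x ∈ s, x j ∈ S fun i => x i) :
    ∑ x ∈ s, ∏ i, W i (x i) ≤ b := by
  classical
  let R : ({i // i ≠ j} → α) → ℝ≥0∞ := fun y => ∏ i : {i // i ≠ j}, W i (y i)
  calc ∑ x ∈ s, ∏ i, W i (x i)
      ≤ ∑ x, if x j ∈ S (fun i => x i) then ∏ i, W i (x i) else 0 := by
        rw [← sum_filter]
        exact sum_le_sum_of_subset fun x hx => mem_filter.2 ⟨mem_univ _, hs x hx⟩
    _ = ∑ p : α × ({i // i ≠ j} → α), if p.1 ∈ S p.2 then W j p.1 * R p.2 else 0 :=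
        Fintype.sum_equiv (Equiv.funSplitAt j α) _ _ fun x => by
          simp [Fintype.prod_eq_mul_prod_subtype_ne _ j, R]
    _ = ∑ y, R y * ∑ a ∈ S y, W j a := by
        rw [Fintype.sum_prod_type, sum_comm]
        refine sum_congr rfl fun y _ => ?_
        rw [mul_sum, ← sum_filter]
        simp [mul_comm]
    _ ≤ ∑ y, R y * b := by gcongr with y; exact hS y
    _ ≤ b := by
        rw [← sum_mul]
        exact mul_le_of_le_one_left' (sum_prod_le_one (fun i : {i // i ≠ j} => W i) (hW ·))

end ProductWeights

theorem sum_prod_mem_submodule_le {ι K : Type*} [Fintype ι] [Field K] [Fintype K]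
    (w : ι → K → ℝ≥0∞) (hw : ∀ i, ∑ a, w i a ≤ 1) {c : ℝ≥0∞} {T : Finset ι}
    (hc : ∀ i ∉ T, ∀ a, w i a ≤ c) (V : Submodule K (ι → K)) {k : ℕ}
    (hk : k + finrank K V + #T ≤ Fintype.card ι) {s : Finset (ι → K)} (hs : ∀ x ∈ s, x ∈ V) :
    ∑ x ∈ s, ∏ i, w i (x i) ≤ c ^ k := by
  classical
  obtain ⟨A, hA, hAV⟩ := V.exists_detecting_finset_card_le_finrank
  obtain ⟨G, hG, rfl⟩ : ∃ G ⊆ (A ∪ T)ᶜ, #G = k := by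
    refine exists_subset_card_eq ?_
    have := card_union_le A T
    rw [card_compl]
    omega
  have hGT : ∀ i ∈ G, i ∉ T := fun i hi hiT => mem_compl.1 (hG hi) (mem_union_right _ hiT)
  refine sum_prod_le_pow_card_of_injOn w hw (fun i hi => hc i (hGT i hi))
    fun x hx y hy hxy => ?_
  rw [← sub_eq_zero]
  refine hAV _ (sub_mem (hs x hx) (hs y hy)) fun i hi => ?_
  have hiG : i ∉ G := fun hiG => mem_compl.1 (hG hiG) (mem_union_left _ hi)
  simpa [sub_eq_zero] using congrFun hxy ⟨i, hiG⟩

theorem exists_mem_span_of_not_linearIndependent {ι K V : Type*} [Field K] [AddCommGroup V]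
    [Module K V] {x : ι → V} (hx : ¬ LinearIndependent K x) :
    ∃ j, x j ∈ Submodule.span K (Set.range fun i : {i // i ≠ j} => x i) := by
  rw [linearIndependent_iff_notMem_span] at hx
  push Not at hx
  obtain ⟨j, hj⟩ := hx
  refine ⟨j, ?_⟩
  convert hj using 3
  ext v
  simp [eq_comm]

theorem sum_prod_not_linearIndependent_le {ι κ K : Type*} [Fintype ι] [Fintype κ] [Field K]
    [Fintype K] (w : ι → κ → K → ℝ≥0∞) (hw : ∀ j i, ∑ a, w j i a ≤ 1) {c : ℝ≥0∞}
    {T : ι → Finset κ} (hc : ∀ j, ∀ i ∉ T j, ∀ a, w j i a ≤ c) {k : ℕ}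
    (hk : ∀ j, k + (Fintype.card ι - 1) + #(T j) ≤ Fintype.card κ)
    {s : Finset (ι → κ → K)} (hs : ∀ x ∈ s, ¬ LinearIndependent K x) :
    ∑ x ∈ s, ∏ j, ∏ i, w j i (x j i) ≤ Fintype.card ι * c ^ k := by
  classical
  rcases isEmpty_or_nonempty ι with hι | hι
  · simp [eq_empty_of_forall_notMem fun x hx => hs x hx linearIndependent_empty_type]
  choose! g hg using fun x hx => exists_mem_span_of_not_linearIndependent (hs x hx)
  let W : ι → (κ → K) → ℝ≥0∞ := fun j z => ∏ i, w j i (z i)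
  have hW : ∀ j, ∑ z, W j z ≤ 1 := fun j => sum_prod_le_one _ (hw j)
  have hfiber : ∀ j, ∑ x ∈ s with g x = j, ∏ j, W j (x j) ≤ c ^ k := by
    intro j
    refine sum_prod_le_of_forall_section W hW j
      (fun y => {z | z ∈ Submodule.span K (Set.range y)}) (fun y => ?_) fun x hx => ?_
    · refine sum_prod_mem_submodule_le _ (hw j) (hc j) _ ?_ fun z hz => (mem_filter.1 hz).2
      have hrank : finrank K (Submodule.span K (Set.range y)) ≤ Fintype.card {i // i ≠ j} :=
        finrank_range_le_card y
      rw [Fintype.card_subtype_compl, Fintype.card_subtype_eq] at hrank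
      have := hk j
      omega
    · obtain ⟨hxs, rfl⟩ := mem_filter.1 hx
      exact mem_filter.2 ⟨mem_univ _, hg x hxs⟩
  calc ∑ x ∈ s, ∏ j, W j (x j)
      = ∑ j, ∑ x ∈ s with g x = j, ∏ j, W j (x j) := (sum_fiberwise s g _).symm
    _ ≤ ∑ _j : ι, c ^ k := sum_le_sum fun j _ => hfiber j
    _ = Fintype.card ι * c ^ k := by simp

theorem measure_eq_prod_of_iIndepFun {Ω κ α : Type*} [MeasurableSpace Ω] {μ : Measure Ω}
    [Fintype κ] [MeasurableSpace α] [MeasurableSingletonClass α] {Z : κ → Ω → α}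
    (hZ : iIndepFun Z μ) (x : κ → α) :
    μ {ω | ∀ k, Z k ω = x k} = ∏ k, μ {ω | Z k ω = x k} := by
  have := hZ.measure_inter_preimage_eq_mul univ (sets := fun k => {x k}) (by simp)
  simpa [Set.preimage, Set.ofPred_forall] using this

theorem measure_not_linearIndependent_le {Ω ι κ K : Type*} [MeasurableSpace Ω] (μ : Measure Ω)
    [IsProbabilityMeasure μ] [Fintype ι] [Fintype κ] [Field K] [Fintype K] [MeasurableSpace K]
    [MeasurableSingletonClass K] (X : ι → Ω → κ → K) (hX : ∀ j i, Measurable fun ω => X j ω i)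
    (hind : iIndepFun (fun p : κ × ι => fun ω => X p.2 ω p.1) μ) {c : ℝ≥0∞}
    {T : ι → Finset κ} (hc : ∀ j, ∀ i ∉ T j, ∀ a, μ {ω | X j ω i = a} ≤ c) {k : ℕ}
    (hk : ∀ j, k + (Fintype.card ι - 1) + #(T j) ≤ Fintype.card κ) :
    μ {ω | ¬ LinearIndependent K fun j => X j ω} ≤ Fintype.card ι * c ^ k := by
  classical
  let Y : Ω → ι → κ → K := fun ω j i => X j ω i
  have hY : Measurable Y := measurable_pi_lambda _ fun j => measurable_pi_lambda _ (hX j)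
  have hlaw : ∀ x, μ (Y ⁻¹' {x}) = ∏ j, ∏ i, μ {ω | X j ω i = x j i} := by
    intro x
    have := measure_eq_prod_of_iIndepFun hind fun p => x p.2 p.1
    rw [Fintype.prod_prod_type, prod_comm] at this
    convert this using 2
    ext ω
    simp [Y, funext_iff, forall_comm (α := ι)]
  have hw : ∀ j i, ∑ a, μ {ω | X j ω i = a} ≤ 1 := fun j i => by
    change ∑ a, μ ((fun ω => X j ω i) ⁻¹' {a}) ≤ 1
    rw [sum_measure_preimage_singleton _ fun a _ => hX j i (measurableSet_singleton a)]
    exact prob_le_one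
  calc μ {ω | ¬ LinearIndependent K fun j => X j ω}
      = μ (Y ⁻¹' ↑(univ.filter fun x : ι → κ → K => ¬ LinearIndependent K x)) := by
        congr 1; ext; simp [Y]
    _ = ∑ x : ι → κ → K with ¬ LinearIndependent K x, μ (Y ⁻¹' {x}) :=
        (sum_measure_preimage_singleton _ fun x _ => hY (measurableSet_singleton x)).symm
    _ = ∑ x : ι → κ → K with ¬ LinearIndependent K x, ∏ j, ∏ i, μ {ω | X j ω i = x j i} :=
        sum_congr rfl fun x _ => hlaw x
    _ ≤ Fintype.card ι * c ^ k :=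
        sum_prod_not_linearIndependent_le _ hw hc hk fun x hx => (mem_filter.1 hx).2

theorem one_sub_toReal_measure_compl_le {Ω : Type*} [MeasurableSpace Ω] (μ : Measure Ω)
    [IsProbabilityMeasure μ] (s : Set Ω) : 1 - (μ sᶜ).toReal ≤ (μ s).toReal := by
  have h : μ Set.univ ≤ μ s + μ sᶜ := by
    simpa [Set.union_compl_self] using measure_union_le (μ := μ) s sᶜ
  rw [measure_univ] at h
  have := ENNReal.toReal_mono (by finiteness) h
  rw [ENNReal.toReal_one, ENNReal.toReal_add (by finiteness) (by finiteness)] at this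
  linarith

theorem ceil_add_add_floor_le {α : ℝ} (hα : 0 ≤ α) (hα6 : α ≤ 1 / 6) {n f : ℕ}
    (hf : (f : ℝ) < α * n) : ⌈5 * α * n⌉₊ + f + ⌊(1 - 6 * α) * n⌋₊ ≤ n := by
  have hceil := Nat.ceil_lt_add_one (show 0 ≤ 5 * α * n by positivity)
  have hfloor := Nat.floor_le (show 0 ≤ (1 - 6 * α) * n by
    have : 0 ≤ 1 - 6 * α := by linarith
    positivity)
  have : ((⌈5 * α * n⌉₊ + f + ⌊(1 - 6 * α) * n⌋₊ : ℕ) : ℝ) < n + 1 := by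
    push_cast
    linarith
  exact Nat.lt_succ_iff.1 (by exact_mod_cast this)

theorem le_mul_rpow_of_le_mul_pow {p r t : ℝ} {m n k : ℕ} (hp1 : p ≤ 1) (hp : p ≤ m * r ^ k)
    (hmn : m ≤ n) (hr : 0 < r) (ht : 0 ≤ t) (htk : t ≤ k) : p ≤ n * r ^ t := by
  rcases le_or_gt r 1 with hr1 | hr1
  · calc p ≤ m * r ^ k := hp
      _ = m * r ^ (k : ℝ) := by rw [Real.rpow_natCast]
      _ ≤ n * r ^ t := mul_le_mul (by exact_mod_cast hmn)
          (Real.rpow_le_rpow_of_exponent_ge hr hr1 htk) (by positivity) (by positivity)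
  · rcases Nat.eq_zero_or_pos m with rfl | hm
    · exact hp.trans (by rw [Nat.cast_zero, zero_mul]; positivity)
    · calc p ≤ 1 := hp1
        _ ≤ n * r ^ t := one_le_mul_of_one_le_of_one_le (by exact_mod_cast hm.trans_le hmn)
            (Real.one_le_rpow hr1.le ht)

/-- **Full rank for thin matrices.** If `X_1, …, X_{⌊(1−6α)n⌋}` are independent near uniform
vectors in `F_q^n` of types `F_1, …` with `|F_i| < αn`, then with probability at least
`1 − n(C/q)^{5αn}` they are linearly independent. -/
theorem near_uniform_thin_full_rank
    (C : ℝ) (hC : 1 ≤ C) :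
    ∃ α₀ > (0 : ℝ), ∀ α : ℝ, 0 < α → α ≤ α₀ →
      ∀ (n m : ℕ), m = ⌊(1 - 6 * α) * n⌋₊ →
      ∀ (F : Type) [Field F] [Fintype F] [MeasurableSpace F] [MeasurableSingletonClass F]
        (Ω : Type) [MeasureSpace Ω], IsProbabilityMeasure (ℙ : Measure Ω) →
      ∀ Fset : Fin m → Finset (Fin n),
        -- |F_i| < αn
        (∀ i, ((Fset i).card : ℝ) < α * n) →
      ∀ X : Fin m → Ω → (Fin n → F),
        (∀ (j : Fin m) (i : Fin n), Measurable fun ω => X j ω i) →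
        -- all entries of all the vectors are (jointly) independent
        iIndepFun
          (fun p : Fin n × Fin m => fun ω => X p.2 ω p.1) ℙ →
        -- X_j is a near uniform vector of type F_j
        (∀ (j : Fin m) (i : Fin n), i ∉ Fset j → ∀ a : F,
          (ℙ {ω | X j ω i = a}).toReal ≤ C / (Fintype.card F : ℝ)) →
        1 - n * (C / (Fintype.card F : ℝ)) ^ (5 * α * n) ≤
          (ℙ {ω | LinearIndependent F fun j : Fin m => X j ω}).toReal := by
  refine ⟨1 / 6, by norm_num, ?_⟩
  intro α hα hα6 n m hm F _ _ _ _ Ω _ _ Fset hFset X hX hind hnear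
  set r := C / Fintype.card F
  have hr : 0 < r := div_pos (by linarith) (by exact_mod_cast Fintype.card_pos)
  set k := ⌈5 * α * n⌉₊
  have hk : ∀ j, k + (Fintype.card (Fin m) - 1) + #(Fset j) ≤ Fintype.card (Fin n) := by
    intro j
    have := hm ▸ ceil_add_add_floor_le hα.le hα6 (hFset j)
    simp only [Fintype.card_fin]
    omega
  have hc : ∀ j, ∀ i ∉ Fset j, ∀ a, ℙ {ω | X j ω i = a} ≤ ENNReal.ofReal r :=
    fun j i hi a => (ENNReal.le_ofReal_iff_toReal_le (measure_ne_top _ _) hr.le).2 (hnear j i hi a)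
  set p := (ℙ {ω | ¬ LinearIndependent F fun j => X j ω}).toReal
  have hp : p ≤ m * r ^ k := by
    simpa [ENNReal.toReal_pow, hr.le] using
      ENNReal.toReal_mono (by finiteness) (measure_not_linearIndependent_le ℙ X hX hind hc hk)
  have hp1 : p ≤ 1 := ENNReal.toReal_le_of_le_ofReal zero_le_one (ENNReal.ofReal_one ▸ prob_le_one)
  have hmn : m ≤ n := hm ▸ Nat.floor_le_of_le (by nlinarith [(n.cast_nonneg : (0 : ℝ) ≤ n)])
  have := le_mul_rpow_of_le_mul_pow hp1 hp hmn hr (by positivity) (Nat.le_ceil _)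
  exact (sub_le_sub_left this 1).trans (one_sub_toReal_measure_compl_le ℙ _)
end

section
/- Let q be a prime power, C ≥ 1, and α > 0 sufficiently small. Suppose the index sets F_1, …, F_n ⊆ [n] satisfy |F_i| < αn and every index i ∈ [n] is contained in at most (1 − 12α)n of the sets F_j. Let X_1, …, X_k be independent random vectors in F_q^n where X_i is a near uniform vector of type F_i with constant C, and (1 − 6α)n ≤ k ≤ n. Let W_k be the span of X_1, …, X_k. Then there exist constants C' > 0 and c > 0 such that with probability at least 1 − (C'/q)^{cn}, every nonzero vector a ∈ F_q^n orthogonal to W_k (i.e. with a · X_i = 0 for all i ≤ k) has at least αn nonzero coordinates. -/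
open MeasureTheory ProbabilityTheory Matrix

/-!
A union bound over sparse vectors. There are at most `2ⁿ q^{αn}` vectors `a` with fewer than `αn`
nonzero coordinates. If `a i₀ ≠ 0`, then at least `6αn` of the columns `X_j` have a near uniform
`i₀`-th entry, and given the other entries of such a column, `a ⬝ᵥ X_j = 0` pins that entry down,
which has probability at most `C/q`. By independence of the columns, `a` is normal to all of them
with probability at most `(C/q)^{6αn}`, and `2ⁿ q^{αn} (C/q)^{6αn} ≤ (2^{1/α} C⁶ / q)^{αn}`.
-/

open Finset
open scoped ENNReal

theorem card_filter_card_support_le {ι M : Type*} [Fintype ι] [DecidableEq ι] [Fintype M]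
    [DecidableEq M] [Zero M] (s : ℕ) :
    #{a : ι → M | #{i | a i ≠ 0} ≤ s} ≤ 2 ^ Fintype.card ι * Fintype.card M ^ s := by
  let small : Finset (Finset ι) := {S | #S ≤ s}
  let supportedIn (S : Finset ι) : Finset (ι → M) :=
    Fintype.piFinset fun i => if i ∈ S then univ else {0}
  have hcover : ({a | #{i | a i ≠ 0} ≤ s} : Finset (ι → M)) ⊆ small.biUnion supportedIn := by
    intro a ha
    refine mem_biUnion.mpr ⟨_, mem_filter.mpr ⟨mem_univ _, (mem_filter.mp ha).2⟩, ?_⟩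
    rw [Fintype.mem_piFinset]
    intro i
    by_cases hi : a i = 0 <;> simp [hi]
  have hcard (S : Finset ι) (hS : S ∈ small) : #(supportedIn S) ≤ Fintype.card M ^ s := by
    simp only [supportedIn, Fintype.card_piFinset, apply_ite card, card_univ, card_singleton,
      prod_ite_mem univ S, univ_inter, prod_const]
    exact Nat.pow_le_pow_right Fintype.card_pos (mem_filter.mp hS).2
  calc #{a : ι → M | #{i | a i ≠ 0} ≤ s}
      ≤ ∑ S ∈ small, #(supportedIn S) := (card_le_card hcover).trans card_biUnion_le
    _ ≤ ∑ S ∈ small, Fintype.card M ^ s := sum_le_sum hcard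
    _ ≤ 2 ^ Fintype.card ι * Fintype.card M ^ s := by
        rw [sum_const, smul_eq_mul]
        gcongr
        exact (card_filter_le _ _).trans (by simp)

section ProductWeights

variable {ι F : Type*} [Fintype ι] [DecidableEq ι] [Fintype F] {r : ι → F → ℝ≥0∞}

theorem sum_prod_eq_one (hr : ∀ i, ∑ x, r i x = 1) : ∑ v : ι → F, ∏ i, r i (v i) = 1 := by
  rw [← Fintype.prod_sum]
  simp [hr]

theorem sum_prod_filter_dotProduct_eq_zero_le [Field F] [DecidableEq F]
    (hr : ∀ i, ∑ x, r i x = 1) {a : ι → F} {i₀ : ι} (ha : a i₀ ≠ 0) {B : ℝ≥0∞}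
    (hB : ∀ x, r i₀ x ≤ B) :
    ∑ v with a ⬝ᵥ v = 0, ∏ i, r i (v i) ≤ B := by
  -- once the coordinates other than `i₀` are fixed, a single value of `v i₀` solves `a ⬝ᵥ v = 0`
  let e := Equiv.funSplitAt i₀ F
  let solve (w : {i // i ≠ i₀} → F) : F := -(∑ i : {i // i ≠ i₀}, a i * w i) / a i₀
  have hsplit (x : F) (w : {i // i ≠ i₀} → F) :
      (a ⬝ᵥ e.symm (x, w) = 0 ↔ x = solve w) ∧
        ∏ i, r i (e.symm (x, w) i) = r i₀ x * ∏ i : {i // i ≠ i₀}, r i (w i) := by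
    have hne (j : {i // i ≠ i₀}) : (j : ι) = i₀ ↔ False := iff_false_intro j.2
    simp only [dotProduct, Fintype.sum_eq_add_sum_subtype_ne _ i₀,
      Fintype.prod_eq_mul_prod_subtype_ne _ i₀, e, Equiv.funSplitAt, Equiv.piSplitAt,
      Equiv.coe_fn_symm_mk, hne, dite_true, dite_false, and_true]
    rw [eq_div_iff ha]
    constructor <;> intro h <;> linear_combination h
  calc ∑ v with a ⬝ᵥ v = 0, ∏ i, r i (v i)
      = ∑ w : {i // i ≠ i₀} → F, r i₀ (solve w) * ∏ i : {i // i ≠ i₀}, r i (w i) := by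
        rw [sum_filter, ← e.symm.sum_comp, Fintype.sum_prod_type_right]
        simp only [hsplit, sum_ite_eq', mem_univ, if_true]
    _ ≤ ∑ w : {i // i ≠ i₀} → F, B * ∏ i : {i // i ≠ i₀}, r i (w i) := by
        gcongr
        exact hB _
    _ = B := by
        rw [← mul_sum, sum_prod_eq_one (r := fun i : {i // i ≠ i₀} => r i) (hr ·), mul_one]

end ProductWeights

theorem ProbabilityTheory.iIndepFun.measure_mem_eq_sum_prod {Ω ι : Type*} [MeasurableSpace Ω]
    {μ : Measure Ω} [Fintype ι] {β : ι → Type*} [∀ i, MeasurableSpace (β i)]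
    [∀ i, MeasurableSingletonClass (β i)] {f : ∀ i, Ω → β i} (hf : ∀ i, Measurable (f i))
    (h : iIndepFun f μ) (T : Finset (∀ i, β i)) :
    μ {ω | (fun i => f i ω) ∈ T} = ∑ x ∈ T, ∏ i, μ (f i ⁻¹' {x i}) := by
  have := h.isProbabilityMeasure
  calc μ {ω | (fun i => f i ω) ∈ T} = μ.map (fun ω i => f i ω) T :=
        (Measure.map_apply (measurable_pi_lambda _ hf) T.measurableSet).symm
    _ = ∑ x ∈ T, ∏ i, μ (f i ⁻¹' {x i}) := by
        rw [h.map_fun_eq_pi_map fun i => (hf i).aemeasurable, ← sum_measure_singleton]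
        simp only [Measure.pi_singleton, Measure.map_apply (hf _) (measurableSet_singleton _)]

section NormalVectors

variable {Ω ι κ F : Type*} [MeasurableSpace Ω] {μ : Measure Ω} [Fintype ι] [Fintype κ] [Field F]
  [Fintype F] [MeasurableSpace F] [MeasurableSingletonClass F] {X : κ → Ω → ι → F}

theorem measure_forall_dotProduct_eq_zero_le (hX : ∀ j i, Measurable fun ω => X j ω i)
    (hindep : iIndepFun (fun p : ι × κ => fun ω => X p.2 ω p.1) μ)
    {a : ι → F} {i₀ : ι} (ha : a i₀ ≠ 0) {J : Finset κ} {B : ℝ≥0∞}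
    (hB : ∀ j ∈ J, ∀ x, μ {ω | X j ω i₀ = x} ≤ B) :
    μ {ω | ∀ j, a ⬝ᵥ X j ω = 0} ≤ B ^ #J := by
  classical
  have := hindep.isProbabilityMeasure
  let r (i : ι) (j : κ) (x : F) : ℝ≥0∞ := μ ((fun ω => X j ω i) ⁻¹' {x})
  have hr (i : ι) (j : κ) : ∑ x, r i j x = 1 := by
    rw [sum_measure_preimage_singleton _ fun x _ => hX j i (measurableSet_singleton x)]
    simp
  -- read column by column, the event lies in the box `∏ⱼ t j`, where the product formula factorizes
  let t (j : κ) : Finset (ι → F) := if j ∈ J then univ.filter (a ⬝ᵥ · = 0) else univ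
  let e : (κ → ι → F) ↪ (ι × κ → F) :=
    ⟨fun N p => N p.2 p.1, fun N N' h => funext₂ fun j i => congrFun h (i, j)⟩
  have hcol (j : κ) : ∑ v ∈ t j, ∏ i, r i j (v i) ≤ if j ∈ J then B else 1 := by
    by_cases hj : j ∈ J
    · simpa [t, hj] using sum_prod_filter_dotProduct_eq_zero_le (hr · j) ha (hB j hj)
    · simp [t, hj, sum_prod_eq_one (hr · j)]
  calc μ {ω | ∀ j, a ⬝ᵥ X j ω = 0}
      ≤ μ {ω | (fun p : ι × κ => X p.2 ω p.1) ∈ (Fintype.piFinset t).map e} := by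
        refine measure_mono fun ω hω => ?_
        have hcols : (fun j => X j ω) ∈ Fintype.piFinset t := by
          refine Fintype.mem_piFinset.mpr fun j => ?_
          by_cases hj : j ∈ J <;> simp [t, hj, hω.out j]
        exact mem_map_of_mem e hcols
    _ = ∑ N ∈ Fintype.piFinset t, ∏ p : ι × κ, r p.1 p.2 (N p.2 p.1) := by
        refine (hindep.measure_mem_eq_sum_prod (fun p : ι × κ => hX p.2 p.1) _).trans ?_
        rw [sum_map]
        rfl
    _ = ∏ j, ∑ v ∈ t j, ∏ i, r i j (v i) := by
        rw [prod_univ_sum]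
        refine sum_congr rfl fun N _ => ?_
        rw [Fintype.prod_prod_type, prod_comm]
    _ ≤ ∏ j, if j ∈ J then B else 1 := prod_le_prod' fun j _ => hcol j
    _ = B ^ #J := by simp [prod_ite_mem]

theorem measure_exists_sparse_dotProduct_eq_zero_le [DecidableEq F]
    (hX : ∀ j i, Measurable fun ω => X j ω i)
    (hindep : iIndepFun (fun p : ι × κ => fun ω => X p.2 ω p.1) μ) {s m : ℕ} {B : ℝ≥0∞}
    (hB : ∀ i, m ≤ #{j | ∀ x, μ {ω | X j ω i = x} ≤ B}) :
    μ {ω | ∃ a : ι → F, a ≠ 0 ∧ #{i | a i ≠ 0} ≤ s ∧ ∀ j, a ⬝ᵥ X j ω = 0} ≤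
      2 ^ Fintype.card ι * Fintype.card F ^ s * B ^ m := by
  classical
  let sparse : Finset (ι → F) := {a | a ≠ 0 ∧ #{i | a i ≠ 0} ≤ s}
  have hnormal (a : ι → F) (ha : a ≠ 0) : μ {ω | ∀ j, a ⬝ᵥ X j ω = 0} ≤ B ^ m := by
    obtain ⟨i₀, hi₀⟩ := Function.ne_iff.mp ha
    obtain ⟨J, hJ, rfl⟩ := exists_subset_card_eq (hB i₀)
    exact measure_forall_dotProduct_eq_zero_le hX hindep hi₀ fun j hj => (mem_filter.mp (hJ hj)).2
  have hsparse : (#sparse : ℝ≥0∞) ≤ 2 ^ Fintype.card ι * Fintype.card F ^ s := by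
    have hsub : sparse ⊆ ({a | #{i | a i ≠ 0} ≤ s} : Finset (ι → F)) := fun a ha =>
      mem_filter.mpr ⟨mem_univ a, (mem_filter.mp ha).2.2⟩
    exact_mod_cast (card_le_card hsub).trans (card_filter_card_support_le s)
  calc μ {ω | ∃ a : ι → F, a ≠ 0 ∧ #{i | a i ≠ 0} ≤ s ∧ ∀ j, a ⬝ᵥ X j ω = 0}
      ≤ μ (⋃ a ∈ sparse, {ω | ∀ j, a ⬝ᵥ X j ω = 0}) := by
        refine measure_mono fun ω ⟨a, ha, has, hω⟩ => ?_
        exact Set.mem_biUnion (mem_filter.mpr ⟨mem_univ a, ha, has⟩) hω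
    _ ≤ ∑ a ∈ sparse, μ {ω | ∀ j, a ⬝ᵥ X j ω = 0} := measure_biUnion_finset_le _ _
    _ ≤ ∑ _a ∈ sparse, B ^ m := sum_le_sum fun a ha => hnormal a (mem_filter.mp ha).2.1
    _ ≤ 2 ^ Fintype.card ι * Fintype.card F ^ s * B ^ m := by
        rw [sum_const, nsmul_eq_mul]
        gcongr

end NormalVectors

theorem le_card_filter_notMem_castLE {n k : ℕ} (hkn : k ≤ n) {α : ℝ}
    (hk : (1 - 6 * α) * n ≤ k) {Fset : Fin n → Finset (Fin n)} {i : Fin n}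
    (hcount : (#{j | i ∈ Fset j} : ℝ) ≤ (1 - 12 * α) * n) :
    6 * α * n ≤ #{j : Fin k | i ∉ Fset (Fin.castLE hkn j)} := by
  have hsplit :=
    card_filter_add_card_filter_not (s := univ) fun j : Fin k => i ∈ Fset (Fin.castLE hkn j)
  have hmaps : #{j : Fin k | i ∈ Fset (Fin.castLE hkn j)} ≤ #{j | i ∈ Fset j} :=
    card_le_card_of_injOn (Fin.castLE hkn) (fun j hj => by simpa using hj)
      (Fin.castLE_injective hkn).injOn
  rw [card_univ, Fintype.card_fin] at hsplit
  have hk' : (k : ℝ) ≤ #{j : Fin k | i ∉ Fset (Fin.castLE hkn j)} + #{j | i ∈ Fset j} := by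
    exact_mod_cast (by omega)
  linarith

theorem one_sub_le_toReal_measure {Ω : Type*} [MeasurableSpace Ω] {μ : Measure Ω}
    [IsProbabilityMeasure μ] {s : Set Ω} {ε : ℝ} (h : (μ sᶜ).toReal ≤ ε) :
    1 - ε ≤ (μ s).toReal := by
  have htotal : 1 ≤ (μ s + μ sᶜ).toReal := by
    simpa using ENNReal.toReal_mono (by finiteness) (measure_univ_le_add_compl s (μ := μ))
  rw [ENNReal.toReal_add (by finiteness) (by finiteness)] at htotal
  linarith

theorem two_pow_mul_pow_floor_mul_pow_ceil_le {α C q : ℝ} {n : ℕ} (hα : 0 < α) (hC : 1 ≤ C)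
    (hq : 2 ^ (1 / α) * C ^ 6 < q) :
    2 ^ n * q ^ ⌊α * n⌋₊ * (C / q) ^ ⌈6 * α * n⌉₊ ≤ (2 ^ (1 / α) * C ^ 6 / q) ^ (α * n) := by
  have h2 : 1 ≤ (2 : ℝ) ^ (1 / α) := Real.one_le_rpow (by norm_num) (by positivity)
  have hCq : C ≤ q := by nlinarith [le_self_pow₀ hC (by norm_num : 6 ≠ 0)]
  have hq : 1 ≤ q := hC.trans hCq
  have hx : 0 ≤ α * n := by positivity
  have hpow2 : (2 : ℝ) ^ n = (2 ^ (1 / α)) ^ (α * n) := by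
    rw [← Real.rpow_mul (by norm_num), ← Real.rpow_natCast]
    congr 1
    field_simp
  have hpowq : q ^ ⌊α * n⌋₊ ≤ q ^ (α * n) := by
    rw [← Real.rpow_natCast]
    exact Real.rpow_le_rpow_of_exponent_le hq (Nat.floor_le hx)
  have hpowCq : (C / q) ^ ⌈6 * α * n⌉₊ ≤ ((C / q) ^ 6) ^ (α * n) := by
    rw [← Real.rpow_natCast, ← Real.rpow_natCast_mul (by positivity), ← mul_assoc]
    exact Real.rpow_le_rpow_of_exponent_ge (by positivity) (div_le_one_of_le₀ hCq (by positivity))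
      (Nat.le_ceil _)
  have hbase : q * (C / q) ^ 6 ≤ C ^ 6 / q := by
    rw [div_pow, mul_div_assoc', div_le_div_iff₀ (by positivity) (by positivity)]
    nlinarith [pow_le_pow_right₀ hq (by norm_num : 2 ≤ 6), pow_pos (by positivity : 0 < C) 6]
  calc 2 ^ n * q ^ ⌊α * n⌋₊ * (C / q) ^ ⌈6 * α * n⌉₊
      ≤ (2 ^ (1 / α)) ^ (α * n) * q ^ (α * n) * ((C / q) ^ 6) ^ (α * n) := by
        rw [hpow2]; gcongr
    _ = (2 ^ (1 / α) * (q * (C / q) ^ 6)) ^ (α * n) := by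
        rw [Real.mul_rpow (by positivity) (by positivity), Real.mul_rpow (by positivity)
          (by positivity), mul_assoc]
    _ ≤ (2 ^ (1 / α) * C ^ 6 / q) ^ (α * n) := by
        rw [mul_div_assoc]
        gcongr

/-- **Non-sparsity of normal vectors.** With high probability, every nonzero vector orthogonal to
the span of the near uniform columns `X_1, …, X_k` (with `(1−6α)n ≤ k ≤ n`) has at least `αn`
nonzero coordinates. -/
theorem near_uniform_no_sparse_normal_vector
    (C : ℝ) (hC : 1 ≤ C) :
    ∃ α₀ > (0 : ℝ), ∀ α : ℝ, 0 < α → α ≤ α₀ →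
    ∃ C' > (0 : ℝ), ∃ c > (0 : ℝ),
      ∀ (n k : ℕ) (hkn : k ≤ n), (1 - 6 * α) * n ≤ (k : ℝ) →
      ∀ (F : Type) [Field F] [Fintype F] [DecidableEq F] [MeasurableSpace F] [MeasurableSingletonClass F]
        (Ω : Type) [MeasureSpace Ω], IsProbabilityMeasure (ℙ : Measure Ω) →
      ∀ Fset : Fin n → Finset (Fin n),
        -- |F_i| < αn
        (∀ i, ((Fset i).card : ℝ) < α * n) →
        -- every index i lies in at most (1 − 12α)n of the sets F_j
        (∀ i : Fin n,
          (((Finset.univ.filter fun j => i ∈ Fset j).card : ℝ) ≤ (1 - 12 * α) * n)) →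
      ∀ X : Fin k → Ω → (Fin n → F),
        (∀ (j : Fin k) (i : Fin n), Measurable fun ω => X j ω i) →
        -- all entries of all the vectors are (jointly) independent
        iIndepFun
          (fun p : Fin n × Fin k => fun ω => X p.2 ω p.1) ℙ →
        -- X_j is a near uniform vector of type F_j
        (∀ (j : Fin k) (i : Fin n), i ∉ Fset (Fin.castLE hkn j) → ∀ a : F,
          (ℙ {ω | X j ω i = a}).toReal ≤ C / (Fintype.card F : ℝ)) →
        1 - (C' / (Fintype.card F : ℝ)) ^ (c * n) ≤
          (ℙ {ω | ∀ a : Fin n → F, a ≠ 0 → (∀ j : Fin k, a ⬝ᵥ X j ω = 0) →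
            α * n ≤ ((Finset.univ.filter fun i : Fin n => a i ≠ 0).card : ℝ)}).toReal := by
  classical
  refine ⟨1, one_pos, fun α hα _ => ⟨2 ^ (1 / α) * C ^ 6, by positivity, α, hα, ?_⟩⟩
  intro n k hkn hk F _ _ _ _ _ Ω _ hP Fset _ hFcount X hmeas hindep hnear
  set q : ℝ := (Fintype.card F : ℝ)
  rcases le_or_gt q (2 ^ (1 / α) * C ^ 6) with hq | hq
  · refine (sub_nonpos.mpr (Real.one_le_rpow ?_ (by positivity))).trans ENNReal.toReal_nonneg
    exact (one_le_div (by positivity)).mpr hq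
  have hspread (i₀ : Fin n) :
      ⌈6 * α * n⌉₊ ≤ #{j | ∀ x, ℙ {ω | X j ω i₀ = x} ≤ ENNReal.ofReal (C / q)} := by
    refine Nat.ceil_le.mpr ((le_card_filter_notMem_castLE hkn hk (hFcount i₀)).trans ?_)
    exact_mod_cast card_le_card (monotone_filter_right _ fun j _ hj x =>
      (ENNReal.le_ofReal_iff_toReal_le (by finiteness) (by positivity)).mpr (hnear j i₀ hj x))
  have hbad := measure_exists_sparse_dotProduct_eq_zero_le (s := ⌊α * n⌋₊) hmeas hindep hspread
  refine one_sub_le_toReal_measure (le_trans ?_ (two_pow_mul_pow_floor_mul_pow_ceil_le hα hC hq))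
  refine (ENNReal.toReal_mono (by finiteness) ((measure_mono fun ω hω => ?_).trans hbad)).trans ?_
  · simp only [Set.mem_compl_iff, Set.mem_ofPred_eq, not_forall, not_le] at hω
    obtain ⟨a, ha, horth, hsparse⟩ := hω
    exact ⟨a, ha, Nat.le_floor hsparse.le, horth⟩
  · have hCq : 0 ≤ C / q := by positivity
    simp [ENNReal.toReal_mul, ENNReal.toReal_pow, hCq, q]
end

section
/- (Counting lemma) Let q be a power of a prime p, F ⊆ [n], and for each i ∉ F let (c_k^i)_{k ∈ F_q} be nonnegative reals summing to 1, and define f_i(t) = |∑_{k ∈ F_q} c_k^i e_p(tr(k t))|, where e_p(x) = exp(2πi x/p) and tr : F_q → F_p is the field trace. Let T ⊆ F_q and K, M be such that for every i ∉ F and a ∉ T one has |f_i(t a)| < K q^{-1/2}. Let B be the set of vectors a = (a_1, …, a_n) ∈ F_q^n with (1/q) ∑_{t ≠ 0} ∏_{i ∉ F} f_i(t a_i) ≥ (K q^{-1/2})^M. Then |B| ≤ q · 2^n · |T|^{n − M − |F|} · q^{M + |F|}. -/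
/-!
For `a` in the structured set, averaging over `t ≠ 0` gives one `t` with
`∏_{i ∉ F} f_i(t a_i) > θ^M`, where `θ = K q^{-1/2}`. Since `0 ≤ f_i ≤ 1`, this forces `θ < 1`,
and at most `M` of the free coordinates can satisfy `t a_i ∉ T` (each such one contributes a
factor `< θ`). Hence `a` lies in a box where at least `n - M - |F|` coordinates are confined to
`t⁻¹ T`; there are fewer than `q` choices of `t`, at most `2^n` choices of the coordinate set,
and each box has at most `|T|^{n-M-|F|} q^{M+|F|}` points.
-/

open MeasureTheory Finset

noncomputable def ep (p : ℕ) (x : ZMod p) : ℂ :=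
  Complex.exp (2 * Real.pi * Complex.I * ((x.val : ℂ) / p))

lemma norm_ep (p : ℕ) (x : ZMod p) : ‖ep p x‖ = 1 := by
  have h : 2 * Real.pi * Complex.I * ((x.val : ℂ) / p) =
      ((2 * Real.pi * x.val / p : ℝ) : ℂ) * Complex.I := by
    push_cast; ring
  rw [ep, h, Complex.norm_exp_ofReal_mul_I]

/-- `f(t) = |E e_p(tr(x t))|` for a random variable `x` on `F` with `P(x = k) = c k`. -/
noncomputable def charFunNorm (p : ℕ) {F : Type*} [Field F] [Fintype F] [Algebra (ZMod p) F]
    (c : F → ℝ) (t : F) : ℝ :=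
  ‖∑ k : F, (c k : ℂ) * ep p (Algebra.trace (ZMod p) F (k * t))‖

lemma charFunNorm_le_one (p : ℕ) {F : Type*} [Field F] [Fintype F] [Algebra (ZMod p) F]
    {c : F → ℝ} (hc0 : ∀ k, 0 ≤ c k) (hc1 : ∑ k, c k = 1) (t : F) : charFunNorm p c t ≤ 1 := by
  calc charFunNorm p c t
      ≤ ∑ k : F, ‖(c k : ℂ) * ep p (Algebra.trace (ZMod p) F (k * t))‖ := norm_sum_le _ _
    _ = ∑ k : F, c k := by
        refine sum_congr rfl fun k _ => ?_
        rw [norm_mul, norm_ep, mul_one, Complex.norm_real, Real.norm_of_nonneg (hc0 k)]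
    _ = 1 := hc1

lemma exists_lt_of_le_inv_mul_sum {α : Type*} {s : Finset α} {g : α → ℝ} {x : ℝ} {q : ℕ}
    (hx : 0 < x) (hs : #s < q) (h : x ≤ (q : ℝ)⁻¹ * ∑ i ∈ s, g i) : ∃ i ∈ s, x < g i := by
  have hq : (0 : ℝ) < q := by exact_mod_cast hs.trans_le' (Nat.zero_le _)
  refine exists_lt_of_sum_lt ?_
  rw [le_inv_mul_iff₀ hq] at h
  calc ∑ _i ∈ s, x = #s * x := by rw [sum_const, nsmul_eq_mul]
    _ < q * x := by gcongr
    _ ≤ _ := h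

/-- `h` must be strict: with `≤`, `f ≡ 1`, `θ = 2`, `M = 0` is a counterexample. -/
lemma card_le_of_pow_lt_prod {ι : Type*} {s S : Finset ι} {f : ι → ℝ} {θ : ℝ} {M : ℕ}
    (hf0 : ∀ i ∈ s, 0 ≤ f i) (hf1 : ∀ i ∈ s, f i ≤ 1) (hS : S ⊆ s) (hSθ : ∀ i ∈ S, f i ≤ θ)
    (h : θ ^ M < ∏ i ∈ s, f i) : #S ≤ M := by
  by_contra! hM
  obtain ⟨j, hj⟩ := card_pos.1 (Nat.zero_lt_of_lt hM)
  have hθ0 : 0 ≤ θ := (hf0 j (hS hj)).trans (hSθ j hj)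
  have hθ1 : θ < 1 := by
    by_contra! hθ1
    exact (one_le_pow₀ hθ1).not_gt (h.trans_le (prod_le_one hf0 hf1))
  have hprod : ∏ i ∈ s, f i ≤ θ ^ #S :=
    calc ∏ i ∈ s, f i ≤ ∏ i ∈ S, f i :=
          prod_le_prod_of_subset_of_le_one hS hf0 fun i hi _ => hf1 i hi
      _ ≤ ∏ _i ∈ S, θ := prod_le_prod (fun i hi => hf0 i (hS hi)) hSθ
      _ = θ ^ #S := prod_const θ
  exact (h.trans_le hprod).not_ge (pow_le_pow_of_le_one hθ0 hθ1.le hM.le)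

lemma card_piFinset_ite_le {ι α : Type*} [Fintype ι] [DecidableEq ι] [Fintype α]
    (W : Finset ι) (A : Finset α) {m : ℕ} (hm : m ≤ #W) :
    #(Fintype.piFinset fun i => if i ∈ W then A else univ) ≤
      #A ^ m * Fintype.card α ^ (Fintype.card ι - m) := by
  have hW : #W ≤ Fintype.card ι := card_le_univ W
  have hA : #A ≤ Fintype.card α := card_le_univ A
  have hWc : #{i | i ∉ W} = Fintype.card ι - #W := by
    rw [filter_not, filter_mem_eq_inter, univ_inter, card_sdiff_of_subset (subset_univ W),
      card_univ]
  rw [Fintype.card_piFinset, prod_apply_ite, prod_const, prod_const, filter_mem_eq_inter,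
    univ_inter, hWc, card_univ]
  calc #A ^ #W * Fintype.card α ^ (Fintype.card ι - #W)
      = #A ^ m * #A ^ (#W - m) * Fintype.card α ^ (Fintype.card ι - #W) := by
        rw [← pow_add, Nat.add_sub_cancel' hm]
    _ ≤ #A ^ m * Fintype.card α ^ (#W - m) * Fintype.card α ^ (Fintype.card ι - #W) := by
        gcongr
    _ = #A ^ m * Fintype.card α ^ (Fintype.card ι - m) := by
        rw [mul_assoc, ← pow_add]; congr 2; omega

section Counting

variable {ι F : Type*} [Fintype ι] [DecidableEq ι] [Field F] [Fintype F] [DecidableEq F]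
  {Fs : Finset ι} {f : ι → F → ℝ} {T : Finset F} {θ : ℝ} {M : ℕ}

lemma exists_ne_zero_card_filter_notMem_le (hf0 : ∀ i ∉ Fs, ∀ x, 0 ≤ f i x)
    (hf1 : ∀ i ∉ Fs, ∀ x, f i x ≤ 1) (hT : ∀ i ∉ Fs, ∀ x ∉ T, f i x < θ) {a : ι → F}
    (ha : θ ^ M ≤ (Fintype.card F : ℝ)⁻¹ *
      ∑ t ∈ univ.erase (0 : F), ∏ i ∈ univ \ Fs, f i (t * a i)) :
    ∃ t ≠ 0, #{i ∈ univ \ Fs | t * a i ∉ T} ≤ M := by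
  rcases le_or_gt θ 0 with hθ | hθ
  · -- no `f i x` lies below `θ ≤ 0`, so nothing escapes `T`
    refine ⟨1, one_ne_zero, (card_eq_zero.2 (filter_eq_empty_iff.2 fun i hi hiT => ?_)).trans_le
      (Nat.zero_le M)⟩
    have hi := (mem_sdiff.1 hi).2
    exact ((hf0 i hi _).trans_lt (hT i hi _ hiT)).not_ge hθ
  · obtain ⟨t, ht, hlt⟩ := exists_lt_of_le_inv_mul_sum (pow_pos hθ M)
      (by rw [card_erase_of_mem (mem_univ 0), card_univ]; exact Nat.sub_lt Fintype.card_pos one_pos)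
      ha
    refine ⟨t, ne_of_mem_erase ht, card_le_of_pow_lt_prod (fun i hi => hf0 i (mem_sdiff.1 hi).2 _)
      (fun i hi => hf1 i (mem_sdiff.1 hi).2 _) (filter_subset _ _) (fun i hi => ?_) hlt⟩
    obtain ⟨hi, hiT⟩ := mem_filter.1 hi
    exact (hT i (mem_sdiff.1 hi).2 _ hiT).le

theorem card_structured_le (hf0 : ∀ i ∉ Fs, ∀ x, 0 ≤ f i x) (hf1 : ∀ i ∉ Fs, ∀ x, f i x ≤ 1)
    (hT : ∀ i ∉ Fs, ∀ x ∉ T, f i x < θ) :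
    #{a : ι → F | θ ^ M ≤ (Fintype.card F : ℝ)⁻¹ *
        ∑ t ∈ univ.erase (0 : F), ∏ i ∈ univ \ Fs, f i (t * a i)} ≤
      Fintype.card F * 2 ^ Fintype.card ι * #T ^ (Fintype.card ι - M - #Fs) *
        Fintype.card F ^ (M + #Fs) := by
  set n := Fintype.card ι
  set q := Fintype.card F
  set m := n - M - #Fs
  set boxes := (univ.erase (0 : F)) ×ˢ (univ : Finset (Finset ι)).filter (m ≤ #·)
  have hcover : (univ : Finset (ι → F)).filter (fun a => θ ^ M ≤ (q : ℝ)⁻¹ *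
        ∑ t ∈ univ.erase (0 : F), ∏ i ∈ univ \ Fs, f i (t * a i)) ⊆ boxes.biUnion
      fun tW => Fintype.piFinset fun i => if i ∈ tW.2 then T.image (tW.1⁻¹ * ·) else univ := by
    intro a ha
    obtain ⟨t, ht, hS⟩ := exists_ne_zero_card_filter_notMem_le hf0 hf1 hT (mem_filter.1 ha).2
    have hW :
        #{i ∈ univ \ Fs | t * a i ∈ T} + #{i ∈ univ \ Fs | t * a i ∉ T} = n - #Fs := by
      rw [card_filter_add_card_filter_not, card_sdiff_of_subset (subset_univ Fs), card_univ]
    have hmW : m ≤ #{i ∈ univ \ Fs | t * a i ∈ T} := by unfold m; omega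
    refine mem_biUnion.2 ⟨(t, {i ∈ univ \ Fs | t * a i ∈ T}), ?_,
      Fintype.mem_piFinset.2 fun i => ?_⟩
    · exact mem_product.2 ⟨mem_erase.2 ⟨ht, mem_univ t⟩, mem_filter.2 ⟨mem_univ _, hmW⟩⟩
    · split_ifs with hi
      · exact mem_image.2 ⟨t * a i, (mem_filter.1 hi).2, inv_mul_cancel_left₀ ht (a i)⟩
      · exact mem_univ _
  have hboxes : #boxes ≤ q * 2 ^ n := by
    rw [card_product]
    gcongr
    · exact card_le_univ _
    · exact (card_filter_le _ _).trans_eq (by rw [card_univ, Fintype.card_finset])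
  calc _ ≤ #boxes * (#T ^ m * q ^ (n - m)) := by
        refine (card_le_card hcover).trans (card_biUnion_le_card_mul _ _ _ fun tW htW => ?_)
        have hmW : m ≤ #tW.2 := (mem_filter.1 (mem_product.1 htW).2).2
        have ht : tW.1 ≠ 0 := ne_of_mem_erase (mem_product.1 htW).1
        have := card_piFinset_ite_le tW.2 (T.image (tW.1⁻¹ * ·)) hmW
        rwa [card_image_of_injective _ (mul_right_injective₀ (inv_ne_zero ht))] at this
    _ ≤ q * 2 ^ n * (#T ^ m * q ^ (M + #Fs)) := by
        gcongr
        · exact Fintype.card_pos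
        · omega
    _ = q * 2 ^ n * #T ^ m * q ^ (M + #Fs) := by ring

end Counting

theorem counting_structured_vectors_general
    (p : ℕ) (F : Type) [Field F] [Fintype F] [DecidableEq F]
    [Algebra (ZMod p) F]
    (n : ℕ) (Fs : Finset (Fin n))
    -- the coefficients (c_k^i), nonnegative and summing to 1, for i ∉ Fs
    (c : Fin n → F → ℝ)
    (hc0 : ∀ i ∉ Fs, ∀ k : F, 0 ≤ c i k)
    (hc1 : ∀ i ∉ Fs, ∑ k : F, c i k = 1)
    (T : Finset F) (K : ℝ) (M : ℕ)
    -- f_i(t) = |∑_k c_k^i e_p(tr(k t))| is < K q^{-1/2} whenever t ∉ T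
    (hT : ∀ i ∉ Fs, ∀ t : F, t ∉ T →
      ‖∑ k : F, (c i k : ℂ) * ep p (Algebra.trace (ZMod p) F (k * t))‖ <
        K * (Fintype.card F : ℝ) ^ (-(1 : ℝ) / 2)) :
    Nat.card {a : Fin n → F //
        (K * (Fintype.card F : ℝ) ^ (-(1 : ℝ) / 2)) ^ M ≤
          (Fintype.card F : ℝ)⁻¹ *
            ∑ t ∈ Finset.univ.erase (0 : F), ∏ i ∈ Finset.univ \ Fs,
              ‖∑ k : F, (c i k : ℂ) * ep p (Algebra.trace (ZMod p) F (k * (t * a i)))‖} ≤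
      Fintype.card F * 2 ^ n * T.card ^ (n - M - Fs.card) *
        Fintype.card F ^ (M + Fs.card) := by
  rw [Nat.card_eq_fintype_card, Fintype.card_subtype]
  have h := card_structured_le (f := fun i => charFunNorm p (c i)) (T := T)
    (θ := K * (Fintype.card F : ℝ) ^ (-(1 : ℝ) / 2)) (M := M)
    (fun _ _ _ => norm_nonneg _) (fun i hi => charFunNorm_le_one p (hc0 i hi) (hc1 i hi)) hT
  rwa [Fintype.card_fin] at h

/-- **Counting lemma.** The set of "structured" vectors `a` (those with
`(1/q) ∑_{t ≠ 0} ∏_{i ∉ F} f_i(t a_i) ≥ (K q^{-1/2})^M`) has size at most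
`q · 2^n · |T|^{n − M − |F|} · q^{M + |F|}`. -/
theorem counting_structured_vectors
    (p : ℕ) (hp : p.Prime) (F : Type) [Field F] [Fintype F] [DecidableEq F] [CharP F p]
    [Algebra (ZMod p) F]
    (n : ℕ) (Fs : Finset (Fin n))
    -- the coefficients (c_k^i), nonnegative and summing to 1, for i ∉ Fs
    (c : Fin n → F → ℝ)
    (hc0 : ∀ i ∉ Fs, ∀ k : F, 0 ≤ c i k)
    (hc1 : ∀ i ∉ Fs, ∑ k : F, c i k = 1)
    (T : Finset F) (K : ℝ) (M : ℕ)
    -- f_i(t) = |∑_k c_k^i e_p(tr(k t))| is < K q^{-1/2} whenever t ∉ T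
    (hT : ∀ i ∉ Fs, ∀ t : F, t ∉ T →
      ‖∑ k : F, (c i k : ℂ) * ep p (Algebra.trace (ZMod p) F (k * t))‖ <
        K * (Fintype.card F : ℝ) ^ (-(1 : ℝ) / 2)) :
    Nat.card {a : Fin n → F //
        (K * (Fintype.card F : ℝ) ^ (-(1 : ℝ) / 2)) ^ M ≤
          (Fintype.card F : ℝ)⁻¹ *
            ∑ t ∈ Finset.univ.erase (0 : F), ∏ i ∈ Finset.univ \ Fs,
              ‖∑ k : F, (c i k : ℂ) * ep p (Algebra.trace (ZMod p) F (k * (t * a i)))‖} ≤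
      Fintype.card F * 2 ^ n * T.card ^ (n - M - Fs.card) *
        Fintype.card F ^ (M + Fs.card) :=
  counting_structured_vectors_general p F n Fs c hc0 hc1 T K M hT
end

section
/- Let q be a prime power and let H ⊆ F_q^n be a fixed subspace of codimension d. Let X be a random vector in F_q^n with independent entries, and suppose δ ≥ 0 is such that for every nonzero w ∈ H^⊥ one has |P(X · w = 0) − 1/q| < δ. Then |P(X ∈ H) − 1/q^d| ≤ 2δ. -/
/-!
Let `W = H^⊥`, so that `|W| = q^d` and `H = W^⊥`. For fixed `x`, the functional `w ↦ x · w` on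
`W` vanishes identically when `x ∈ H`, and otherwise its kernel has `|W| / q` elements. Double
counting the pairs `(x, w)` with `x · w = 0`, each weighted by `P(X = x)`, therefore gives
`∑_{w ∈ W} (q P(X · w = 0) - 1) = (q - 1) |W| P(X ∈ H)`.
The term `w = 0` equals `q - 1` and each of the other `|W| - 1` terms is at most `q δ` in absolute
value, so `(q - 1) |W| |P(X ∈ H) - 1/|W|| ≤ (|W| - 1) q δ ≤ 2 (q - 1) |W| δ`.
-/

open MeasureTheory ProbabilityTheory Matrix Module

lemma Module.Dual.natCard_ker_mul_card {K V : Type*} [Field K] [Fintype K] [AddCommGroup V]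
    [Module K V] [Finite V] {f : Module.Dual K V} (hf : f ≠ 0) :
    Nat.card (LinearMap.ker f) * Fintype.card K = Nat.card V := by
  rw [natCard_eq_pow_finrank (K := K), natCard_eq_pow_finrank (K := K) (V := V),
    ← f.finrank_ker_add_one_of_ne_zero hf, Nat.card_eq_fintype_card, pow_succ]

section DotProductOrthogonal

variable {K ι : Type*} [Field K] [Fintype ι]

lemma dotProductBilin_isRefl :
    LinearMap.BilinForm.IsRefl (dotProductBilin K K : LinearMap.BilinForm K (ι → K)) :=
  fun x y h => by simpa [dotProduct_comm] using h

lemma dotProductBilin_nondegenerate :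
    (dotProductBilin K K : LinearMap.BilinForm K (ι → K)).Nondegenerate :=
  ⟨fun x hx => dotProduct_eq_zero x hx,
    fun y hy => dotProduct_eq_zero y fun x => by simpa [dotProduct_comm] using hy x⟩

def Submodule.dotProductOrthogonal (H : Submodule K (ι → K)) : Submodule K (ι → K) :=
  LinearMap.BilinForm.orthogonal (dotProductBilin K K) H

namespace Submodule

variable {H : Submodule K (ι → K)} {x : ι → K}

lemma mem_dotProductOrthogonal {w : ι → K} :
    w ∈ H.dotProductOrthogonal ↔ ∀ v ∈ H, w ⬝ᵥ v = 0 := by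
  simp [dotProductOrthogonal, dotProduct_comm]

lemma finrank_dotProductOrthogonal :
    finrank K H.dotProductOrthogonal = Fintype.card ι - finrank K H := by
  rw [dotProductOrthogonal, LinearMap.BilinForm.finrank_orthogonal dotProductBilin_nondegenerate,
    finrank_fintype_fun_eq_card]

lemma mem_iff_forall_mem_dotProductOrthogonal :
    x ∈ H ↔ ∀ w ∈ H.dotProductOrthogonal, x ⬝ᵥ w = 0 := by
  conv_lhs => rw [← LinearMap.BilinForm.orthogonal_orthogonal dotProductBilin_nondegenerate
    dotProductBilin_isRefl H]
  simp [dotProductOrthogonal, dotProduct_comm]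

lemma natCard_dotProduct_eq_zero_of_mem (hx : x ∈ H) :
    Nat.card {w : H.dotProductOrthogonal // x ⬝ᵥ w = 0} = Nat.card H.dotProductOrthogonal :=
  Nat.card_congr <| Equiv.subtypeUnivEquiv fun w =>
    H.mem_iff_forall_mem_dotProductOrthogonal.mp hx w w.2

lemma natCard_dotProduct_eq_zero_mul_card_of_notMem [Fintype K] (hx : x ∉ H) :
    Nat.card {w : H.dotProductOrthogonal // x ⬝ᵥ w = 0} * Fintype.card K =
      Nat.card H.dotProductOrthogonal := by
  let f : Module.Dual K H.dotProductOrthogonal :=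
    (dotProductBilin K K x).domRestrict H.dotProductOrthogonal
  have hf : f ≠ 0 := fun hf => hx <| H.mem_iff_forall_mem_dotProductOrthogonal.mpr
    fun w hw => LinearMap.congr_fun hf ⟨w, hw⟩
  exact f.natCard_ker_mul_card hf

end Submodule

end DotProductOrthogonal

section Measure

variable {K ι : Type*} [Field K] [Fintype K] [Fintype ι] [MeasurableSpace K]
  [MeasurableSingletonClass K] (ν : Measure (ι → K)) (H : Submodule K (ι → K))

lemma sum_measureReal_dotProduct_eq_zero_mul_card [IsFiniteMeasure ν]
    [Fintype H.dotProductOrthogonal] :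
    ∑ w : H.dotProductOrthogonal, ν.real {x | x ⬝ᵥ w = 0} * Fintype.card K =
      Nat.card H.dotProductOrthogonal * (ν.real Set.univ + (Fintype.card K - 1) * ν.real H) := by
  classical
  set q : ℝ := (Fintype.card K : ℝ)
  have hatoms (p : (ι → K) → Prop) : ν.real {x | p x} = ∑ x, if p x then ν.real {x} else 0 := by
    rw [← Finset.sum_filter, sum_measureReal_singleton]
    congr 1
    ext; simp
  have hcount (x : ι → K) : (Nat.card {w : H.dotProductOrthogonal // x ⬝ᵥ w = 0} : ℝ) * q =
      Nat.card H.dotProductOrthogonal * (1 + (q - 1) * if x ∈ H then 1 else 0) := by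
    by_cases hx : x ∈ H
    · rw [H.natCard_dotProduct_eq_zero_of_mem hx, if_pos hx]
      ring
    · rw [← H.natCard_dotProduct_eq_zero_mul_card_of_notMem hx, if_neg hx]
      push_cast
      ring
  calc ∑ w : H.dotProductOrthogonal, ν.real {x | x ⬝ᵥ w = 0} * q
      = ∑ x, ν.real {x} * (Nat.card {w : H.dotProductOrthogonal // x ⬝ᵥ w = 0} * q) := by
        simp_rw [hatoms, Finset.sum_mul]
        rw [Finset.sum_comm]
        refine Finset.sum_congr rfl fun x _ => ?_
        rw [Nat.card_eq_fintype_card, Fintype.card_subtype, ← Finset.sum_boole, Finset.sum_mul,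
          Finset.mul_sum]
        refine Finset.sum_congr rfl fun w _ => ?_
        split_ifs <;> ring
    _ = Nat.card H.dotProductOrthogonal * (ν.real Set.univ + (q - 1) * ν.real H) := by
        rw [← Set.ofPred_true, ← Set.ofPred_mem_eq (s := (H : Set (ι → K))), hatoms, hatoms]
        simp_rw [hcount, Finset.mul_sum, if_true, SetLike.mem_coe]
        rw [← Finset.sum_add_distrib, Finset.mul_sum]
        refine Finset.sum_congr rfl fun x _ => ?_
        split_ifs <;> ring

lemma sum_measureReal_dotProduct_eq_zero_mul_card_sub_one [IsProbabilityMeasure ν]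
    [Fintype H.dotProductOrthogonal] :
    ∑ w : H.dotProductOrthogonal, (ν.real {x | x ⬝ᵥ w = 0} * Fintype.card K - 1) =
      (Fintype.card K - 1) * Nat.card H.dotProductOrthogonal * ν.real H := by
  rw [Finset.sum_sub_distrib, sum_measureReal_dotProduct_eq_zero_mul_card, Finset.sum_const,
    Finset.card_univ, ← Nat.card_eq_fintype_card (α := H.dotProductOrthogonal), probReal_univ,
    nsmul_one]
  ring

theorem abs_measureReal_sub_inv_natCard_dotProductOrthogonal_le [IsProbabilityMeasure ν]
    {δ : ℝ} (hδ : 0 ≤ δ) (hperp : ∀ w ∈ H.dotProductOrthogonal, w ≠ 0 →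
      |ν.real {x | x ⬝ᵥ w = 0} - (Fintype.card K : ℝ)⁻¹| ≤ δ) :
    |ν.real H - (Nat.card H.dotProductOrthogonal : ℝ)⁻¹| ≤ 2 * δ := by
  classical
  have hq : (2 : ℝ) ≤ Fintype.card K := mod_cast (Fintype.one_lt_card : 1 < Fintype.card K)
  have hN : (1 : ℝ) ≤ Nat.card H.dotProductOrthogonal :=
    mod_cast (Nat.card_pos : 0 < Nat.card H.dotProductOrthogonal)
  have hsum := sum_measureReal_dotProduct_eq_zero_mul_card_sub_one ν H
  set q : ℝ := (Fintype.card K : ℝ)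
  set N : ℝ := (Nat.card H.dotProductOrthogonal : ℝ)
  set f : H.dotProductOrthogonal → ℝ := fun w => ν.real {x | x ⬝ᵥ w = 0} * q - 1
  have hbound : |∑ w, f w - (q - 1)| ≤ (N - 1) * (q * δ) := by
    have hf0 : f 0 = q - 1 := by simp [f]
    rw [Fintype.sum_eq_add_sum_compl 0, hf0, add_sub_cancel_left]
    calc |∑ w ∈ {0}ᶜ, f w| ≤ ∑ w ∈ ({0}ᶜ : Finset H.dotProductOrthogonal), q * δ := by
          refine (Finset.abs_sum_le_sum_abs _ _).trans (Finset.sum_le_sum fun w hw => ?_)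
          have hw0 : (w : ι → K) ≠ 0 := by simpa using hw
          rw [show f w = q * (ν.real {x | x ⬝ᵥ w = 0} - q⁻¹) by simp only [f]; field_simp,
            abs_mul, abs_of_nonneg (by linarith)]
          exact mul_le_mul_of_nonneg_left (hperp w w.2 hw0) (by linarith)
      _ = (N - 1) * (q * δ) := by
          rw [Finset.sum_const, Finset.card_compl, Finset.card_singleton, nsmul_eq_mul,
            ← Nat.card_eq_fintype_card]
          push_cast [Nat.one_le_iff_ne_zero.mpr Nat.card_pos.ne']
          rfl
  have hpos : 0 < (q - 1) * N := by nlinarith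
  refine le_of_mul_le_mul_right ?_ hpos
  calc |ν.real H - N⁻¹| * ((q - 1) * N) = |∑ w, f w - (q - 1)| := by
        rw [hsum, ← abs_of_pos hpos, ← abs_mul, abs_of_pos hpos]
        congr 1
        field_simp
    _ ≤ (N - 1) * (q * δ) := hbound
    _ ≤ 2 * δ * ((q - 1) * N) := by
        nlinarith [mul_nonneg (mul_nonneg (by linarith : 0 ≤ N) (by linarith : 0 ≤ q - 2)) hδ,
          mul_nonneg (by linarith : 0 ≤ q) hδ]

end Measure

theorem mem_subspace_of_unstructured_perp_general
    (n d : ℕ) (hd : d ≤ n) (F : Type) [Field F] [Fintype F]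
    [MeasurableSpace F] [MeasurableSingletonClass F]
    (Ω : Type) [MeasureSpace Ω] (hprob : IsProbabilityMeasure (ℙ : Measure Ω))
    (H : Submodule F (Fin n → F))
    -- H has codimension d
    (hH : Module.finrank F H = n - d)
    (X : Ω → (Fin n → F))
    (hmeas : ∀ i, Measurable fun ω => X ω i)
    (δ : ℝ) (hδ : 0 ≤ δ)
    -- every nonzero w in the orthogonal complement of H satisfies |P(X·w = 0) − 1/q| < δ
    (hperp : ∀ w : Fin n → F, w ≠ 0 → (∀ v ∈ H, w ⬝ᵥ v = 0) →
      |(ℙ {ω | X ω ⬝ᵥ w = 0}).toReal - (Fintype.card F : ℝ)⁻¹| < δ) :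
    |(ℙ {ω | X ω ∈ H}).toReal - ((Fintype.card F : ℝ) ^ d)⁻¹| ≤ 2 * δ := by
  have hX : Measurable X := measurable_pi_iff.mpr hmeas
  have hcard : Nat.card H.dotProductOrthogonal = Fintype.card F ^ d := by
    rw [natCard_eq_pow_finrank (K := F), H.finrank_dotProductOrthogonal, hH, Fintype.card_fin,
      Nat.card_eq_fintype_card, Nat.sub_sub_self hd]
  have := Measure.isProbabilityMeasure_map (μ := ℙ) hX.aemeasurable
  have key := abs_measureReal_sub_inv_natCard_dotProductOrthogonal_le ((ℙ : Measure Ω).map X) H hδ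
    fun w hw hw0 => by
      rw [map_measureReal_apply hX (Set.toFinite _).measurableSet]
      exact (hperp w hw0 (Submodule.mem_dotProductOrthogonal.mp hw)).le
  rwa [map_measureReal_apply hX (Set.toFinite _).measurableSet, hcard, Nat.cast_pow] at key

/-- **Unstructured normal vectors give near-uniform membership probability.** If every nonzero
`w ∈ H^⊥` satisfies `|P(X · w = 0) − 1/q| < δ`, then `|P(X ∈ H) − 1/q^d| ≤ 2δ`, where `d` is the
codimension of `H`. -/
theorem mem_subspace_of_unstructured_perp
    (n d : ℕ) (hd : d ≤ n) (F : Type) [Field F] [Fintype F]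
    [MeasurableSpace F] [MeasurableSingletonClass F]
    (Ω : Type) [MeasureSpace Ω] (hprob : IsProbabilityMeasure (ℙ : Measure Ω))
    (H : Submodule F (Fin n → F))
    -- H has codimension d
    (hH : Module.finrank F H = n - d)
    (X : Ω → (Fin n → F))
    (hmeas : ∀ i, Measurable fun ω => X ω i)
    -- the entries of X are independent
    (hindep : iIndepFun (fun i : Fin n => fun ω => X ω i) ℙ)
    (δ : ℝ) (hδ : 0 ≤ δ)
    -- every nonzero w in the orthogonal complement of H satisfies |P(X·w = 0) − 1/q| < δ
    (hperp : ∀ w : Fin n → F, w ≠ 0 → (∀ v ∈ H, w ⬝ᵥ v = 0) →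
      |(ℙ {ω | X ω ⬝ᵥ w = 0}).toReal - (Fintype.card F : ℝ)⁻¹| < δ) :
    |(ℙ {ω | X ω ∈ H}).toReal - ((Fintype.card F : ℝ) ^ d)⁻¹| ≤ 2 * δ :=
  mem_subspace_of_unstructured_perp_general n d hd F Ω hprob H hH X hmeas δ hδ hperp
end
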